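/- arXiv:math/9404219 — 4 statements merged into one kernel-verified Lean document; each statement's English description precedes it below -/
import Mathlib

section
/- The function g(x) = arctan(√x)/√x, extended by g(0) = 1, satisfies the differential equation (2x + 2x²) g''(x) + (3 + 5x) g'(x) + g(x) = 0 for all x > 0, with g(0) = 1 and g'(0) = -1/3 (as limits from the right). -/
/-!
Differentiating `√x · g(x) = arctan √x` gives the first-order equation
`2x g'(x) + g(x) = 1 / (1 + x)`. Differentiating it once more and eliminating `1 / (1 + x)`
yields the second-order equation. At `0⁺`, substitute `x = s²`: then `g = arctan s / s → 1`, and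
`g' = -(arctan s - s / (1 + s²)) / (2 s³) → -1/3` by L'Hôpital's rule.
-/

open Real Filter Set Topology

lemma hasDerivAt_arctan_sqrt_div_sqrt {x : ℝ} (hx : 0 < x) :
    HasDerivAt (fun y => arctan √y / √y) (((1 + x)⁻¹ - arctan √x / √x) / (2 * x)) x := by
  have hsqrt := hasDerivAt_sqrt hx.ne'
  have h : HasDerivAt (fun y => arctan √y / √y) _ x :=
    ((hasDerivAt_arctan √x).comp x hsqrt).div hsqrt (sqrt_pos.mpr hx).ne'
  convert h using 1
  have hsq := sq_sqrt hx.le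
  simp only [Function.comp_apply]
  field_simp
  rw [hsq]
  ring

lemma second_order_ode_of_first_order {g : ℝ → ℝ} {x : ℝ} (hx : 0 < x)
    (hg : ∀ᶠ y in 𝓝 x, HasDerivAt g (((1 + y)⁻¹ - g y) / (2 * y)) y) :
    (2 * x + 2 * x ^ 2) * deriv (deriv g) x + (3 + 5 * x) * deriv g x + g x = 0 := by
  have hg' := hg.self_of_nhds
  have hderiv : deriv g =ᶠ[𝓝 x] fun y => ((1 + y)⁻¹ - g y) / (2 * y) :=
    hg.mono fun _ hy => hy.deriv
  have hderiv' : HasDerivAt (fun y => ((1 + y)⁻¹ - g y) / (2 * y)) _ x :=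
    ((((hasDerivAt_id' x).const_add 1).inv (by positivity)).sub hg').div
      ((hasDerivAt_id' x).const_mul 2) (by positivity)
  rw [hderiv.deriv_eq, hderiv'.deriv, hg'.deriv]
  simp only [Pi.sub_apply, Pi.inv_apply]
  field_simp
  ring

lemma tendsto_sqrt_nhdsGT_zero : Tendsto (√·) (𝓝[>] 0) (𝓝[>] 0) :=
  tendsto_nhdsWithin_of_tendsto_nhds_of_eventually_within _
    (by simpa using (continuous_sqrt.tendsto 0).mono_left nhdsWithin_le_nhds)
    (eventually_mem_nhdsWithin.mono fun _ hx => sqrt_pos.mpr hx)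

lemma tendsto_arctan_div_self_nhdsGT_zero :
    Tendsto (fun s => arctan s / s) (𝓝[>] 0) (𝓝 1) := by
  have h := (hasDerivAt_arctan 0).tendsto_slope_zero_right
  norm_num at h
  simpa only [div_eq_inv_mul] using h

lemma hasDerivAt_arctan_sub_div_one_add_sq (s : ℝ) :
    HasDerivAt (fun s => arctan s - s / (1 + s ^ 2)) (2 * s ^ 2 / (1 + s ^ 2) ^ 2) s := by
  have h : HasDerivAt (fun s => arctan s - s / (1 + s ^ 2)) _ s := (hasDerivAt_arctan s).sub
    ((hasDerivAt_id' s).div ((hasDerivAt_pow 2 s).const_add 1) (by positivity))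
  convert h using 1
  field_simp
  ring

lemma tendsto_arctan_sub_div_one_add_sq_div_cube :
    Tendsto (fun s => (arctan s - s / (1 + s ^ 2)) / s ^ 3) (𝓝[>] 0) (𝓝 (2 / 3)) := by
  have hcont : Continuous fun s : ℝ => arctan s - s / (1 + s ^ 2) :=
    continuous_arctan.sub (continuous_id.div (by fun_prop) fun s => by positivity)
  have hratio : Tendsto (fun s : ℝ => 2 / (3 * (1 + s ^ 2) ^ 2)) (𝓝[>] 0) (𝓝 (2 / 3)) := by
    have : Continuous fun s : ℝ => 2 / (3 * (1 + s ^ 2) ^ 2) :=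
      continuous_const.div (by fun_prop) fun s => by positivity
    simpa using (this.tendsto 0).mono_left nhdsWithin_le_nhds
  refine HasDerivAt.lhopital_zero_nhdsGT (.of_forall hasDerivAt_arctan_sub_div_one_add_sq)
    (.of_forall fun s => hasDerivAt_pow 3 s) ?_ ?_ ?_ (hratio.congr' ?_)
  · filter_upwards [self_mem_nhdsWithin] with s (hs : 0 < s)
    positivity
  · simpa using (hcont.tendsto 0).mono_left nhdsWithin_le_nhds
  · simpa using ((continuous_pow 3).tendsto (0 : ℝ)).mono_left nhdsWithin_le_nhds
  · filter_upwards [self_mem_nhdsWithin] with s (hs : 0 < s)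
    field_simp
    ring

theorem arctan_sqrt_ode_general (g : ℝ → ℝ)
    (hg : ∀ x > (0 : ℝ), g x = Real.arctan (Real.sqrt x) / Real.sqrt x) :
    (∀ x > (0 : ℝ),
        (2 * x + 2 * x ^ 2) * deriv (deriv g) x + (3 + 5 * x) * deriv g x + g x = 0) ∧
      Filter.Tendsto g (nhdsWithin 0 (Set.Ioi 0)) (nhds 1) ∧
      Filter.Tendsto (deriv g) (nhdsWithin 0 (Set.Ioi 0)) (nhds (-1 / 3)) := by
  have hg' : ∀ x > 0, HasDerivAt g (((1 + x)⁻¹ - g x) / (2 * x)) x := fun x hx => by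
    rw [hg x hx]
    exact (hasDerivAt_arctan_sqrt_div_sqrt hx).congr_of_eventuallyEq
      (eventually_of_mem (Ioi_mem_nhds hx) hg)
  refine ⟨fun x hx => second_order_ode_of_first_order hx ?_, ?_, ?_⟩
  · filter_upwards [Ioi_mem_nhds hx] with y hy using hg' y hy
  · refine (tendsto_arctan_div_self_nhdsGT_zero.comp tendsto_sqrt_nhdsGT_zero).congr' ?_
    filter_upwards [self_mem_nhdsWithin] with x hx using (hg x hx).symm
  · have h := (tendsto_arctan_sub_div_one_add_sq_div_cube.const_mul (-1 / 2)).comp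
      tendsto_sqrt_nhdsGT_zero
    rw [show -1 / 2 * (2 / 3 : ℝ) = -1 / 3 by norm_num] at h
    refine h.congr' ?_
    filter_upwards [self_mem_nhdsWithin] with x (hx : 0 < x)
    obtain ⟨s, hs, rfl⟩ : ∃ s > 0, x = s ^ 2 := ⟨√x, sqrt_pos.mpr hx, (sq_sqrt hx.le).symm⟩
    rw [(hg' _ hx).deriv, hg _ hx, Function.comp_apply, sqrt_sq hs.le]
    field_simp
    ring

theorem arctan_sqrt_ode (g : ℝ → ℝ) (hg0 : g 0 = 1)
    (hg : ∀ x > (0 : ℝ), g x = Real.arctan (Real.sqrt x) / Real.sqrt x) :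
    (∀ x > (0 : ℝ),
        (2 * x + 2 * x ^ 2) * deriv (deriv g) x + (3 + 5 * x) * deriv g x + g x = 0) ∧
      Filter.Tendsto g (nhdsWithin 0 (Set.Ioi 0)) (nhds 1) ∧
      Filter.Tendsto (deriv g) (nhdsWithin 0 (Set.Ioi 0)) (nhds (-1 / 3)) :=
  arctan_sqrt_ode_general g hg
end

section
/- For |x| < 1, e^x - 2 e^{-x/2} cos(√3·x/2 - π/3) = Σ_{k=0}^∞ 9(k+1) x^{3k+2} / (3k+3)!; in fact the identity holds for all real x. -/
/-!
With `ω` a primitive cube root of unity, `∑ j < 3, ω ^ j * exp (ω ^ j * x)` has Taylor coefficients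
`∑ j < 3, ω ^ (j * (m + 1))`, which vanish unless `3 ∣ m + 1` and are `3` otherwise; so it is
`∑ₖ 3 x ^ (3k+2) / (3k+2)! = ∑ₖ 9 (k+1) x ^ (3k+2) / (3k+3)!`. For real `x` the terms `j = 1, 2`
are complex conjugates, and twice the real part of `ω e^{ωx}` is `-2 e^{-x/2} cos (√3 x / 2 - π / 3)`.
-/

open Finset Nat

theorem IsPrimitiveRoot.sum_pow_mul_eq_ite {R : Type*} [CommRing R] [IsDomain R] {ζ : R} {n : ℕ}
    (hζ : IsPrimitiveRoot ζ n) (m : ℕ) :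
    ∑ j ∈ range n, ζ ^ (j * m) = if n ∣ m then (n : R) else 0 := by
  simp_rw [mul_comm _ m, pow_mul]
  split_ifs with hm
  · simp [(hζ.pow_eq_one_iff_dvd m).2 hm]
  · have hne : ζ ^ m - 1 ≠ 0 := sub_ne_zero.2 (mt (hζ.pow_eq_one_iff_dvd m).1 hm)
    have hgeom : (∑ j ∈ range n, (ζ ^ m) ^ j) * (ζ ^ m - 1) = 0 := by
      rw [geom_sum_mul, ← pow_mul, mul_comm, pow_mul, hζ.pow_eq_one, one_pow, sub_self]
    exact (mul_eq_zero.1 hgeom).resolve_right hne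

theorem Complex.hasSum_exp (z : ℂ) : HasSum (fun m : ℕ => z ^ m / m !) (Complex.exp z) :=
  Complex.exp_eq_exp_ℂ ▸ NormedSpace.expSeries_div_hasSum_exp z

theorem Complex.hasSum_exp_multisection {n r s : ℕ} {ζ : ℂ} (hζ : IsPrimitiveRoot ζ n)
    (hr : r < n) (hrs : n ∣ r + s) (z : ℂ) :
    HasSum (fun k : ℕ => n * z ^ (n * k + r) / (n * k + r)!)
      (∑ j ∈ range n, ζ ^ (j * s) * Complex.exp (ζ ^ j * z)) := by
  have hsum := hasSum_sum fun j (_ : j ∈ range n) =>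
    (Complex.hasSum_exp (ζ ^ j * z)).mul_left (ζ ^ (j * s))
  have hcoeff : ∀ m : ℕ, ∑ j ∈ range n, ζ ^ (j * s) * ((ζ ^ j * z) ^ m / m !)
      = if n ∣ m + s then n * z ^ m / m ! else 0 := by
    intro m
    calc ∑ j ∈ range n, ζ ^ (j * s) * ((ζ ^ j * z) ^ m / m !)
        = (∑ j ∈ range n, ζ ^ (j * (m + s))) * (z ^ m / m !) := by
          rw [sum_mul]
          refine sum_congr rfl fun j _ => ?_
          ring
      _ = _ := by
          rw [hζ.sum_pow_mul_eq_ite]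
          split_ifs <;> ring
  simp_rw [hcoeff] at hsum
  have hinj : Function.Injective fun k : ℕ => n * k + r := fun a b h =>
    Nat.eq_of_mul_eq_mul_left (by omega) (Nat.add_right_cancel h)
  have hsupp : ∀ m ∉ Set.range fun k : ℕ => n * k + r,
      (if n ∣ m + s then (n : ℂ) * z ^ m / m ! else 0) = 0 := by
    intro m hm
    refine if_neg fun hms => ?_
    have hmod : m % n = r := by
      have : m ≡ r [MOD n] := Nat.ModEq.add_right_cancel' s
        ((Nat.modEq_zero_iff_dvd.2 hms).trans (Nat.modEq_zero_iff_dvd.2 hrs).symm)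
      rw [this, Nat.mod_eq_of_lt hr]
    exact hm ⟨m / n, show n * (m / n) + r = m by rw [← hmod, Nat.div_add_mod]⟩
  convert (hinj.hasSum_iff hsupp).2 hsum using 1
  funext k
  have hdvd : n ∣ n * k + r + s := by rw [add_assoc]; exact dvd_add (dvd_mul_right n k) hrs
  simp [hdvd]

open Complex
open scoped Real

theorem Complex.exp_two_pi_mul_I_div_three :
    exp (2 * π * I / 3) = -1 / 2 + √3 / 2 * I := by
  have hcos : Real.cos (2 * π / 3) = -1 / 2 := by
    rw [show 2 * π / 3 = π - π / 3 by ring, Real.cos_pi_sub, Real.cos_pi_div_three]; ring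
  have hsin : Real.sin (2 * π / 3) = √3 / 2 := by
    rw [show 2 * π / 3 = π - π / 3 by ring, Real.sin_pi_sub, Real.sin_pi_div_three]
  rw [show 2 * π * I / 3 = ((2 * π / 3 : ℝ) : ℂ) * I by push_cast; ring, exp_mul_I,
    ← ofReal_cos, ← ofReal_sin, hcos, hsin]
  push_cast; ring

local notation "ω" => (-1 / 2 + √3 / 2 * I : ℂ)

theorem sq_cube_root_eq_conj : ω ^ 2 = (starRingEnd ℂ) ω := by
  have h3 : (√3 : ℂ) ^ 2 = 3 := by exact_mod_cast Real.sq_sqrt (by norm_num : (0 : ℝ) ≤ 3)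
  simp only [map_add, map_mul, map_div₀, map_neg, map_one, map_ofNat, conj_ofReal, conj_I]
  linear_combination I ^ 2 / 4 * h3 + 3 / 4 * I_sq

theorem re_cube_root_mul_exp (x : ℝ) :
    (ω * exp (ω * x)).re = -(Real.exp (-x / 2) * Real.cos (√3 * x / 2 - π / 3)) := by
  have hexp : ω * exp (ω * x) = Real.exp (-x / 2) * exp ((√3 * x / 2 - π / 3 + π : ℝ) * I) :=
    calc ω * exp (ω * x) = exp (2 * π * I / 3) * exp (ω * x) := by
          rw [exp_two_pi_mul_I_div_three]
      _ = _ := by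
          rw [← exp_add, ofReal_exp, ← exp_add]
          congr 1
          push_cast
          ring
  rw [hexp, re_ofReal_mul, exp_ofReal_mul_I_re, Real.cos_add_pi, mul_neg]

theorem sum_cube_roots_mul_exp (x : ℝ) :
    ∑ j ∈ range 3, ω ^ (j * 1) * exp (ω ^ j * x)
      = (Real.exp x - 2 * Real.exp (-x / 2) * Real.cos (√3 * x / 2 - π / 3) : ℝ) := by
  have hconj : ω ^ 2 * exp (ω ^ 2 * x) = (starRingEnd ℂ) (ω * exp (ω * x)) := by
    rw [sq_cube_root_eq_conj, map_mul, ← exp_conj, map_mul, conj_ofReal]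
  simp only [sum_range_succ, sum_range_zero, mul_one, pow_zero, pow_one, one_mul, zero_add]
  rw [hconj, add_assoc, add_conj, re_cube_root_mul_exp]
  push_cast; ring

theorem add_one_mul_div_factorial_succ {K : Type*} [Field K] [CharZero K] (m : ℕ) (y : K) :
    ((m : K) + 1) * y / (m + 1)! = y / m ! := by
  rw [Nat.factorial_succ, Nat.cast_mul, Nat.cast_succ,
    mul_div_mul_left _ _ (Nat.cast_add_one_ne_zero m)]

theorem exp_cos_series (x : ℝ) :
    HasSum (fun k : ℕ => 9 * ((k : ℝ) + 1) * x ^ (3 * k + 2) / (Nat.factorial (3 * k + 3)))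
      (Real.exp x - 2 * Real.exp (-x / 2) * Real.cos (Real.sqrt 3 * x / 2 - Real.pi / 3)) := by
  have hω : IsPrimitiveRoot ω 3 := by
    simpa [exp_two_pi_mul_I_div_three] using isPrimitiveRoot_exp 3 three_ne_zero
  have hsum := hasSum_exp_multisection hω (r := 2) (s := 1) (by norm_num) (by norm_num) x
  rw [sum_cube_roots_mul_exp] at hsum
  have hterm : ∀ k : ℕ, 9 * ((k : ℝ) + 1) * x ^ (3 * k + 2) / (3 * k + 3)!
      = 3 * x ^ (3 * k + 2) / (3 * k + 2)! := fun k => by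
    rw [← add_one_mul_div_factorial_succ (3 * k + 2)]; push_cast; ring
  simp only [hterm]
  exact_mod_cast hsum
end

section
/- For |x| ≤ 1, arcsin(x) = Σ_{k=0}^∞ ((2k)!² / (4^k · k!² · (2k+1)!)) x^{2k+1}. Equivalently, arcsin(x) = Σ_{k=0}^∞ (2k choose k) x^{2k+1} / (4^k (2k+1)). -/
/-!
By the binomial series with exponent `-1/2`, `1 / √(1 - t²) = ∑ (2k choose k) t^(2k) / 4^k`
for `|t| < 1`. Integrating termwise from `0` to `x` (dominated convergence: for `|t| ≤ |x|` the
terms are bounded by those at `|x|`) gives the series `∑ c_k x^(2k+1)` of `arcsin x` for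
`|x| < 1`. At `x = 1` the coefficients are nonnegative, so their partial sums are bounded by
`lim_{x → 1⁻} arcsin x`, and `∑ c_k x^(2k+1) ≤ ∑ c_k` gives the reverse inequality in the limit;
`x = -1` follows by oddness.
-/

open Real Set Finset Filter Topology Interval

theorem Ring.choose_natCast_sub_half {K : Type*} [Field K] [CharZero K] (n : ℕ) :
    Ring.choose ((n : K) - 1 / 2) n = Nat.centralBinom n / 4 ^ n := by
  induction n with
  | zero => simp
  | succ n ih =>
    have hlast : ((n : K) + 1) * Ring.choose ((n : K) - 1 / 2) (n + 1) =
        Ring.choose ((n : K) - 1 / 2) n * (-1 / 2) := by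
      have := Ring.choose_smul_choose ((n : K) - 1 / 2) (Nat.le_succ n)
      simpa [Nat.choose_succ_self_right, Ring.choose_one_right, sub_sub_cancel_left,
        neg_div] using this
    have hcb : ((n : K) + 1) * Nat.centralBinom (n + 1) =
        2 * (2 * n + 1) * Nat.centralBinom n := by
      exact_mod_cast Nat.succ_mul_centralBinom_succ n
    have hn : (n : K) + 1 ≠ 0 := Nat.cast_add_one_ne_zero n
    rw [Nat.cast_succ, show (n : K) + 1 - 1 / 2 = (n - 1 / 2) + 1 by ring, Ring.choose_succ_succ,
      ← mul_right_inj' hn, mul_add, hlast, ih, pow_succ]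
    field_simp
    linear_combination (-2 : K) * hcb

theorem hasSum_centralBinom_div_four_pow_mul_pow {s : ℝ} (hs : |s| < 1) :
    HasSum (fun n => Nat.centralBinom n / 4 ^ n * s ^ n) (1 / √(1 - s)) := by
  have hcoeff (n : ℕ) : Ring.choose (1 / 2 + n - 1 : ℝ) n = Nat.centralBinom n / 4 ^ n := by
    rw [← Ring.choose_natCast_sub_half]; ring_nf
  have := (Real.one_div_one_sub_rpow_hasFPowerSeriesOnBall_zero (1 / 2)).hasSum
    (y := s) (by simpa [← ofReal_norm] using hs)
  simpa only [FormalMultilinearSeries.ofScalars_apply_eq, zero_add, smul_eq_mul, hcoeff,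
    ← Real.sqrt_eq_rpow] using this

theorem abs_le_abs_of_mem_uIcc_zero {x t : ℝ} (ht : t ∈ [[0, x]]) : |t| ≤ |x| := by
  simpa using Set.abs_sub_left_of_mem_uIcc ht

theorem integral_one_div_sqrt_one_sub_sq {x : ℝ} (hx : |x| < 1) :
    ∫ t in 0..x, 1 / √(1 - t ^ 2) = arcsin x := by
  have hlt {t : ℝ} (ht : t ∈ [[0, x]]) : |t| < 1 := (abs_le_abs_of_mem_uIcc_zero ht).trans_lt hx
  rw [intervalIntegral.integral_eq_sub_of_hasDerivAt (f := arcsin), arcsin_zero, sub_zero]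
  · intro t ht
    obtain ⟨h₁, h₂⟩ := abs_lt.mp (hlt ht)
    exact hasDerivAt_arcsin h₁.ne' h₂.ne
  · refine ContinuousOn.intervalIntegrable (continuousOn_const.div (by fun_prop) fun t ht => ?_)
    rw [Real.sqrt_ne_zero', sub_pos, sq_lt_one_iff_abs_lt_one]
    exact hlt ht

theorem hasSum_arcsin_of_abs_lt {x : ℝ} (hx : |x| < 1) :
    HasSum (fun k => Nat.centralBinom k / (4 ^ k * (2 * k + 1)) * x ^ (2 * k + 1))
      (arcsin x) := by
  have hseries {t : ℝ} (ht : |t| ≤ |x|) :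
      HasSum (fun k => Nat.centralBinom k / 4 ^ k * t ^ (2 * k)) (1 / √(1 - t ^ 2)) := by
    have : |t ^ 2| < 1 := by
      rw [abs_pow, sq_lt_one_iff₀ (abs_nonneg t)]; exact ht.trans_lt hx
    simpa only [pow_mul] using hasSum_centralBinom_div_four_pow_mul_pow this
  have hmem {t : ℝ} (ht : t ∈ Ι 0 x) : |t| ≤ |x| :=
    abs_le_abs_of_mem_uIcc_zero (uIoc_subset_uIcc ht)
  have hint : HasSum (fun k => ∫ t in 0..x, Nat.centralBinom k / 4 ^ k * t ^ (2 * k))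
      (∫ t in 0..x, 1 / √(1 - t ^ 2)) := by
    refine intervalIntegral.hasSum_integral_of_dominated_convergence
      (fun k _ => Nat.centralBinom k / 4 ^ k * |x| ^ (2 * k))
      (fun k => (by fun_prop : Continuous _).aestronglyMeasurable) (fun k => ?_)
      (.of_forall fun _ _ => (hseries (abs_abs x).le).summable) intervalIntegrable_const
      (.of_forall fun t ht => hseries (hmem ht))
    refine .of_forall fun t ht => ?_
    rw [norm_mul, norm_pow, Real.norm_eq_abs, Real.norm_eq_abs, abs_of_nonneg (by positivity)]
    exact mul_le_mul_of_nonneg_left (pow_le_pow_left₀ (abs_nonneg t) (hmem ht) _) (by positivity)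
  rw [integral_one_div_sqrt_one_sub_sq hx] at hint
  convert hint using 2 with k
  rw [intervalIntegral.integral_const_mul, integral_pow]
  push_cast
  field_simp
  ring

theorem hasSum_of_tendsto_nhdsLT_of_nonneg {c : ℕ → ℝ} (hc : ∀ k, 0 ≤ c k) (e : ℕ → ℕ)
    {g : ℝ → ℝ} {l : ℝ} (hg : ∀ x ∈ Ioo (0 : ℝ) 1, HasSum (fun k => c k * x ^ e k) (g x))
    (hl : Tendsto g (𝓝[<] 1) (𝓝 l)) : HasSum c l := by
  have hnear : ∀ᶠ x in 𝓝[<] (1 : ℝ), x ∈ Ioo (0 : ℝ) 1 := Ioo_mem_nhdsLT zero_lt_one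
  have hpartial (n : ℕ) : ∑ k ∈ range n, c k ≤ l := by
    have hpoly : Tendsto (fun x : ℝ => ∑ k ∈ range n, c k * x ^ e k) (𝓝[<] 1)
        (𝓝 (∑ k ∈ range n, c k)) := by
      simpa using ((by fun_prop : Continuous fun x : ℝ => ∑ k ∈ range n, c k * x ^ e k).tendsto
        1).mono_left nhdsWithin_le_nhds
    refine le_of_tendsto_of_tendsto hpoly hl (hnear.mono fun x hx => ?_)
    exact sum_le_hasSum _ (fun k _ => mul_nonneg (hc k) (pow_nonneg hx.1.le _)) (hg x hx)
  have hsum : Summable c := summable_of_sum_range_le hc hpartial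
  refine hsum.hasSum_iff.mpr (le_antisymm (tsum_le_of_sum_range_le hc hpartial) ?_)
  refine le_of_tendsto hl (hnear.mono fun x hx => hasSum_le (fun k => ?_) (hg x hx) hsum.hasSum)
  exact mul_le_of_le_one_right (hc k) (pow_le_one₀ hx.1.le hx.2.le)

theorem hasSum_arcsin_one :
    HasSum (fun k => (Nat.centralBinom k : ℝ) / (4 ^ k * (2 * k + 1))) (π / 2) := by
  refine hasSum_of_tendsto_nhdsLT_of_nonneg (fun k => by positivity) (fun k => 2 * k + 1)
    (fun x hx => hasSum_arcsin_of_abs_lt (abs_lt.mpr ⟨by linarith [hx.1], hx.2⟩)) ?_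
  rw [← arcsin_one]
  exact continuous_arcsin.continuousWithinAt.tendsto

theorem factorial_two_mul_sq_div_eq (k : ℕ) :
    ((2 * k).factorial : ℝ) ^ 2 / (4 ^ k * (k.factorial : ℝ) ^ 2 * (2 * k + 1).factorial) =
      Nat.centralBinom k / (4 ^ k * (2 * k + 1)) := by
  rw [Nat.centralBinom_eq_two_mul_choose, Nat.cast_choose ℝ (by omega : k ≤ 2 * k),
    show 2 * k - k = k by omega, Nat.factorial_succ]
  push_cast
  field_simp

theorem arcsin_series (x : ℝ) (hx : |x| ≤ 1) :
    HasSum (fun k : ℕ =>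
      (Nat.factorial (2 * k) : ℝ) ^ 2 /
        (4 ^ k * (Nat.factorial k : ℝ) ^ 2 * (Nat.factorial (2 * k + 1) : ℝ)) *
        x ^ (2 * k + 1))
      (Real.arcsin x) := by
  simp only [factorial_two_mul_sq_div_eq]
  rcases hx.lt_or_eq with hlt | heq
  · exact hasSum_arcsin_of_abs_lt hlt
  rcases (abs_eq zero_le_one).mp heq with rfl | rfl
  · simpa [arcsin_one] using hasSum_arcsin_one
  · simpa [Odd.neg_one_pow ⟨_, rfl⟩, arcsin_neg_one, neg_div] using hasSum_arcsin_one.neg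
end

section
/- The cube of arcsin satisfies the fourth-order differential equation x f' + (7x² - 4) f'' + 6x(x² - 1) f''' + (x² - 1)² f'''' = 0 on (-1, 1), where f(x) = (arcsin x)³. -/
/-!
Under the substitution `x = sin θ`, the Chebyshev operator `L = (1 - x²) d²/dx² - x d/dx`
becomes `d²/dθ²`, i.e. `L (p ∘ arcsin) = p'' ∘ arcsin`. The left-hand side of the equation is
`L (L f)`, and for `f = arcsin³` this is `(θ³)'''' ∘ arcsin = 0`.
-/

open Real Set Filter Topology

section IteratedDeriv

variable {𝕜 F : Type*} [NontriviallyNormedField 𝕜] [NormedAddCommGroup F] [NormedSpace 𝕜 F]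
  {f : 𝕜 → F} {x : 𝕜} {n : WithTop ℕ∞} {m : ℕ}

theorem ContDiffAt.differentiableAt_iteratedDeriv (h : ContDiffAt 𝕜 n f x) (hmn : m < n) :
    DifferentiableAt 𝕜 (iteratedDeriv m f) x := by
  rw [iteratedDeriv_eq_equiv_comp]
  exact (ContinuousMultilinearMap.piFieldEquiv 𝕜 (Fin m) F).symm.differentiableAt.comp x
    (h.differentiableAt_iteratedFDeriv hmn)

theorem ContDiffAt.hasDerivAt_iteratedDeriv (h : ContDiffAt 𝕜 n f x) (hmn : m < n) :
    HasDerivAt (iteratedDeriv m f) (iteratedDeriv (m + 1) f x) x := by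
  rw [iteratedDeriv_succ]
  exact (h.differentiableAt_iteratedDeriv hmn).hasDerivAt

end IteratedDeriv

noncomputable def chebyshevOp (f : ℝ → ℝ) (x : ℝ) : ℝ :=
  (1 - x ^ 2) * iteratedDeriv 2 f x - x * deriv f x

theorem Filter.EventuallyEq.chebyshevOp_eq {f g : ℝ → ℝ} {x : ℝ} (h : f =ᶠ[𝓝 x] g) :
    chebyshevOp f x = chebyshevOp g x := by
  rw [chebyshevOp, chebyshevOp, h.iteratedDeriv_eq 2, h.deriv_eq]

theorem hasDerivAt_chebyshevOp {f : ℝ → ℝ} {x : ℝ} (h : ContDiffAt ℝ 3 f x) :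
    HasDerivAt (chebyshevOp f)
      ((1 - x ^ 2) * iteratedDeriv 3 f x - 3 * x * iteratedDeriv 2 f x - deriv f x) x := by
  have h₁ : HasDerivAt (iteratedDeriv 1 f) (iteratedDeriv 2 f x) x :=
    h.hasDerivAt_iteratedDeriv (by norm_num)
  have h₂ : HasDerivAt (iteratedDeriv 2 f) (iteratedDeriv 3 f x) x :=
    h.hasDerivAt_iteratedDeriv (by norm_num)
  rw [iteratedDeriv_one] at h₁
  refine ((((hasDerivAt_pow 2 x).const_sub 1).fun_mul h₂).fun_sub
    ((hasDerivAt_id' x).fun_mul h₁)).congr_deriv ?_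
  norm_num
  ring

theorem chebyshevOp_chebyshevOp {f : ℝ → ℝ} {x : ℝ} (h : ContDiffAt ℝ 4 f x) :
    chebyshevOp (chebyshevOp f) x =
      x * deriv f x + (7 * x ^ 2 - 4) * iteratedDeriv 2 f x +
        6 * x * (x ^ 2 - 1) * iteratedDeriv 3 f x + (x ^ 2 - 1) ^ 2 * iteratedDeriv 4 f x := by
  have hderiv : deriv (chebyshevOp f) =ᶠ[𝓝 x]
      fun y => (1 - y ^ 2) * iteratedDeriv 3 f y - 3 * y * iteratedDeriv 2 f y - deriv f y :=
    (h.eventually (by simp)).mono fun y hy =>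
      (hasDerivAt_chebyshevOp (hy.of_le (by norm_num))).deriv
  have h₁ : HasDerivAt (deriv f) (iteratedDeriv 2 f x) x := by
    simpa only [iteratedDeriv_one] using h.hasDerivAt_iteratedDeriv (m := 1) (by norm_num)
  have h₂ : HasDerivAt (iteratedDeriv 2 f) (iteratedDeriv 3 f x) x :=
    h.hasDerivAt_iteratedDeriv (by norm_num)
  have h₃ : HasDerivAt (iteratedDeriv 3 f) (iteratedDeriv 4 f x) x :=
    h.hasDerivAt_iteratedDeriv (by norm_num)
  have h₄ := ((((hasDerivAt_pow 2 x).const_sub 1).fun_mul h₃).fun_sub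
    (((hasDerivAt_id' x).const_mul 3).fun_mul h₂)).fun_sub h₁
  rw [chebyshevOp, iteratedDeriv_succ, iteratedDeriv_one, (hasDerivAt_chebyshevOp
    (h.of_le (by norm_num))).deriv, hderiv.deriv_eq, h₄.deriv]
  ring

theorem chebyshevOp_comp_arcsin {p : ℝ → ℝ} (hp : ContDiff ℝ 2 p) {x : ℝ}
    (hx : x ∈ Ioo (-1) 1) : chebyshevOp (p ∘ arcsin) x = iteratedDeriv 2 p (arcsin x) := by
  have hp' : ∀ θ, HasDerivAt (deriv p) (iteratedDeriv 2 p θ) θ := fun θ => by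
    simpa only [iteratedDeriv_one] using
      hp.contDiffAt.hasDerivAt_iteratedDeriv (m := 1) (by norm_num)
  have hderiv : deriv (p ∘ arcsin) =ᶠ[𝓝 x] fun y => deriv p (arcsin y) / √(1 - y ^ 2) :=
    eventually_of_mem (Ioo_mem_nhds hx.1 hx.2) fun y hy =>
      (((hp.differentiable (by norm_num) _).hasDerivAt.comp y
        (hasDerivAt_arcsin hy.1.ne' hy.2.ne)).congr_deriv (mul_one_div _ _)).deriv
  have hu : 0 < 1 - x ^ 2 := by nlinarith [hx.1, hx.2]
  have hs := ((hasDerivAt_pow 2 x).const_sub 1).sqrt hu.ne'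
  have h₂ : HasDerivAt (fun y => deriv p (arcsin y) / √(1 - y ^ 2)) _ x :=
    ((hp' _).comp x (hasDerivAt_arcsin hx.1.ne' hx.2.ne)).fun_div hs (Real.sqrt_pos.2 hu).ne'
  rw [chebyshevOp, iteratedDeriv_succ, iteratedDeriv_one, hderiv.deriv_eq, h₂.deriv,
    hderiv.eq_of_nhds, Function.comp_apply]
  have hsq : √(1 - x ^ 2) ^ 2 = 1 - x ^ 2 := Real.sq_sqrt hu.le
  set s := √(1 - x ^ 2)
  have hs0 : s ≠ 0 := (Real.sqrt_pos.2 hu).ne'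
  rw [← hsq]
  field_simp
  ring

theorem arcsin_cube_ode (f : ℝ → ℝ) (hf : ∀ x, f x = Real.arcsin x ^ 3)
    (x : ℝ) (hx1 : -1 < x) (hx2 : x < 1) :
    x * deriv f x + (7 * x ^ 2 - 4) * iteratedDeriv 2 f x +
      6 * x * (x ^ 2 - 1) * iteratedDeriv 3 f x +
      (x ^ 2 - 1) ^ 2 * iteratedDeriv 4 f x = 0 := by
  obtain rfl : f = (· ^ 3) ∘ arcsin := funext hf
  have hcube : ∀ θ : ℝ, iteratedDeriv 2 (· ^ 3) θ = 6 * θ := fun θ => by simp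
  have hinner : chebyshevOp ((· ^ 3) ∘ arcsin) =ᶠ[𝓝 x] (6 * ·) ∘ arcsin :=
    eventually_of_mem (Ioo_mem_nhds hx1 hx2) fun y hy => by
      rw [chebyshevOp_comp_arcsin (by fun_prop) hy, hcube, Function.comp_apply]
  calc _ = chebyshevOp (chebyshevOp ((· ^ 3) ∘ arcsin)) x :=
        (chebyshevOp_chebyshevOp ((contDiffAt_arcsin hx1.ne' hx2.ne).pow 3)).symm
    _ = chebyshevOp ((6 * ·) ∘ arcsin) x := hinner.chebyshevOp_eq
    _ = iteratedDeriv 2 (6 * ·) (arcsin x) := chebyshevOp_comp_arcsin (by fun_prop) ⟨hx1, hx2⟩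
    _ = 0 := by simp [iteratedDeriv_succ]
end
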